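/- Let G = ⟨a,b | a^{b²} = a·a^b, [a,a^b] = 1⟩, realized as (ℤ×ℤ) ⋊ ℤ with generator t acting via the matrix with rows (0,1),(1,1). Then G is an R*-group: for any g, x₁, ..., x_r ∈ G, if g^{x₁}·g^{x₂}···g^{x_r} = 1 then g = 1. -/

import Mathlib

/-!
Every conjugate of `g` has the same image in the torsion-free quotient `ℤ`, so a product of
`r ≥ 1` conjugates of `g` equal to `1` forces `g` into the normal subgroup `ℤ × ℤ`. There,
`(d, c) ↦ d + φ c` (with `φ` the golden ratio) is an additive map which multiplies by `φ`
under the action of the generator, so it sends the product of the conjugates to a positive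
multiple `∑ φ^kᵢ` of its value at `g`. That value therefore vanishes, and the map is injective
because `φ` is irrational.
-/

/-- The automorphism of `ℤ × ℤ` given by the matrix with rows `(0,1),(1,1)`. -/
def fibAut : AddAut (ℤ × ℤ) where
  toFun p := (p.2, p.1 + p.2)
  invFun p := (p.2 - p.1, p.1)
  left_inv p := by simp
  right_inv p := by simp
  map_add' p q := by
    simp only [Prod.snd_add, Prod.fst_add, Prod.mk_add_mk, Prod.mk.injEq]
    constructor <;> first | ring1 | omega | (simp; omega) | rfl | trivial

/-- The action of `ℤ` on `ℤ × ℤ` via `fibAut`. -/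
def fibAction : Multiplicative ℤ →* MulAut (Multiplicative (ℤ × ℤ)) :=
  zpowersHom (MulAut (Multiplicative (ℤ × ℤ))) (AddEquiv.toMultiplicative fibAut)

/-- The group `⟨a,b | a^{b²} = a·a^b, [a,a^b] = 1⟩`, realized as `(ℤ × ℤ) ⋊ ℤ`. -/
abbrev FibH : Type :=
  SemidirectProduct (Multiplicative (ℤ × ℤ)) (Multiplicative ℤ) fibAction

theorem map_eq_one_of_prod_conj_eq_one {G H : Type*} [Group G] [CommGroup H] [IsMulTorsionFree H]
    (f : G →* H) {g : G} {L : List G} (hL : L ≠ [])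
    (h : (L.map (fun x => x⁻¹ * g * x)).prod = 1) : f g = 1 := by
  have hpow : f g ^ L.length = 1 := by
    simpa [map_list_prod, List.map_map, Function.comp_def] using congrArg f h
  simpa [hL] using hpow

namespace SemidirectProduct

theorem inv_mul_inl_mul {N G : Type*} [CommGroup N] [Group G] {φ : G →* MulAut N}
    (x : N ⋊[φ] G) (n : N) : x⁻¹ * inl n * x = inl (φ x.right⁻¹ n) := by
  ext <;> simp

end SemidirectProduct

open Real goldenRatio

noncomputable def goldenFunctional : ℤ × ℤ →+ ℝ where
  toFun p := p.1 + φ * p.2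
  map_zero' := by simp
  map_add' p q := by simp only [Prod.fst_add, Prod.snd_add]; push_cast; ring

theorem goldenFunctional_apply (p : ℤ × ℤ) : goldenFunctional p = p.1 + φ * p.2 := rfl

theorem goldenFunctional_injective : Function.Injective goldenFunctional := by
  refine (injective_iff_map_eq_zero _).2 fun ⟨d, c⟩ h => ?_
  rw [goldenFunctional_apply] at h
  obtain rfl : c = 0 := by
    by_contra hc
    refine goldenRatio_irrational ⟨-d / c, ?_⟩
    rw [Rat.cast_div, div_eq_iff (by exact_mod_cast hc)]
    push_cast at h ⊢
    linarith
  simpa using h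

theorem goldenFunctional_fibAut (p : ℤ × ℤ) :
    goldenFunctional (fibAut p) = φ * goldenFunctional p := by
  change goldenFunctional (p.2, p.1 + p.2) = _
  simp only [goldenFunctional_apply]
  push_cast
  linear_combination (-(p.2 : ℝ)) * goldenRatio_sq

theorem goldenFunctional_fibAction (k : Multiplicative ℤ) (a : Multiplicative (ℤ × ℤ)) :
    goldenFunctional (fibAction k a).toAdd = φ ^ k.toAdd * goldenFunctional a.toAdd := by
  set σ := AddEquiv.toMultiplicative fibAut
  have hσ (b) : goldenFunctional (σ b).toAdd = φ * goldenFunctional b.toAdd :=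
    goldenFunctional_fibAut b.toAdd
  have hσ_inv (b) : goldenFunctional (σ⁻¹ b).toAdd = φ⁻¹ * goldenFunctional b.toAdd := by
    rw [eq_inv_mul_iff_mul_eq₀ goldenRatio_ne_zero, ← hσ, MulAut.apply_inv_self]
  change goldenFunctional ((σ ^ k.toAdd) a).toAdd = _
  induction k.toAdd using Int.induction_on generalizing a with
  | zero => simp
  | succ n ih =>
    rw [zpow_add_one, MulAut.mul_apply, ih, hσ, zpow_add_one₀ goldenRatio_ne_zero]; ring
  | pred n ih =>
    rw [zpow_sub_one, MulAut.mul_apply, ih, hσ_inv, zpow_sub_one₀ goldenRatio_ne_zero]; ring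

theorem goldenFunctional_prod_fibAction (a : Multiplicative (ℤ × ℤ))
    (L : List (Multiplicative ℤ)) :
    goldenFunctional ((L.map fun k => fibAction k a).prod).toAdd =
      (L.map fun k => φ ^ k.toAdd).sum * goldenFunctional a.toAdd := by
  simp [map_list_sum, Function.comp_def, goldenFunctional_fibAction, List.sum_map_mul_right]

theorem eq_one_of_prod_fibAction_eq_one {a : Multiplicative (ℤ × ℤ)}
    {L : List (Multiplicative ℤ)} (hL : L ≠ []) (h : (L.map fun k => fibAction k a).prod = 1) :
    a = 1 := by
  have hsum := goldenFunctional_prod_fibAction a L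
  have hpos : 0 < (L.map fun k => φ ^ k.toAdd).sum :=
    List.sum_pos _ (by simp [zpow_pos goldenRatio_pos]) (by simpa using hL)
  rw [h, toAdd_one, map_zero, zero_eq_mul, or_iff_right hpos.ne'] at hsum
  rw [← toAdd_eq_zero, ← goldenFunctional_injective.eq_iff, hsum, map_zero]

open SemidirectProduct in
/-- `G = ⟨a,b | a^{b²} = a·a^b, [a,a^b] = 1⟩ ≅ (ℤ×ℤ) ⋊ ℤ` is an `R*`-group:
any product of conjugates of a single element `g` equal to `1` forces `g = 1`. -/
theorem stmt_17 (g : FibH) (L : List FibH) (hL : L ≠ [])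
    (h : (L.map (fun x => x⁻¹ * g * x)).prod = 1) : g = 1 := by
  obtain ⟨a, rfl⟩ : g ∈ (inl : _ →* FibH).range := by
    rw [range_inl_eq_ker_rightHom]
    exact map_eq_one_of_prod_conj_eq_one rightHom hL h
  simp only [inv_mul_inl_mul] at h
  have ha : a = 1 := eq_one_of_prod_fibAction_eq_one (L := L.map fun x => x.right⁻¹)
    (by simpa using hL) (inl_injective (by simpa [map_list_prod, Function.comp_def] using h))
  rw [ha, map_one]
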